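/- Let p be a prime with p ≡ 1 (mod 4), v ∈ ℚ_p a p-adic unit that is not a square in ℚ_p, A = diag(1, -v, p), and SO(3)_p = {L ∈ M₃(ℚ_p) : LᵀAL = A, det L = 1}. Let e₁, e₂, e₃ be the standard basis vectors of ℚ_p³. Then every M ∈ SO(3)_p can be written as M = X·Z·Y with X, Z, Y ∈ SO(3)_p satisfying X e₁ = e₁, Z e₃ = e₃, Y e₂ = e₂; and likewise every M ∈ SO(3)_p can be written as M = Y'·Z'·X' with Y', Z', X' ∈ SO(3)_p satisfying Y' e₂ = e₂, Z' e₃ = e₃, X' e₁ = e₁. -/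

import Mathlib

/-!
For odd `p` and a non-square unit `v`, `x² - v y²` is the norm form of the unramified quadratic
extension of `ℚ_p`, so its nonzero values have even valuation while `p z²` has odd valuation.
Hence a vector `(a, b, c)` on which `Q₊` takes a unit value has `|a|, |b| ≤ 1` and `|p c²| < 1`.
As `p ≡ 1 mod 4`, `-1` is a square and so `-v` is not; this forces `b` (for the column `M e₂`)
resp. `a` (for `M e₁`) to be a unit, and Hensel's lemma then provides the square root that
writes this column as `X Z e₂` (resp. `Y Z e₁`) with explicit rotations around the axes.
The remaining factor `(X Z)⁻¹ M` (resp. `(Y Z)⁻¹ M`) is a rotation fixing `e₂` (resp. `e₁`).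
-/

open Matrix

namespace PadicInt

variable {p : ℕ} [Fact p.Prime]

theorem isSquare_of_norm_sq_sub_lt {x a : ℤ_[p]} (h : ‖a ^ 2 - x‖ < ‖2 * a‖ ^ 2) :
    IsSquare x := by
  obtain ⟨z, hz, -⟩ := hensels_lemma (F := Polynomial.X ^ 2 - Polynomial.C x) (a := a)
    (by simpa [Polynomial.derivative_X_pow, mul_comm, ← one_add_one_eq_two] using h)
  exact ⟨z, by simpa [sq, sub_eq_zero, eq_comm] using hz⟩

theorem norm_two (hp2 : p ≠ 2) : ‖(2 : ℤ_[p])‖ = 1 := by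
  exact_mod_cast norm_natCast_eq_one_iff.mpr ((Nat.coprime_primes Fact.out Nat.prime_two).mpr hp2)

theorem isSquare_of_isSquare_toZMod (hp2 : p ≠ 2) {x : ℤ_[p]} (hx0 : toZMod x ≠ 0)
    (hx : IsSquare (toZMod x)) : IsSquare x := by
  obtain ⟨y, hy⟩ := hx
  obtain ⟨z, rfl⟩ := ZMod.ringHom_surjective toZMod y
  have hz : ‖z‖ = 1 := by
    rw [← isUnit_iff, ← IsLocalRing.notMem_maximalIdeal, ← ker_toZMod, RingHom.mem_ker]
    intro h
    exact hx0 (by rw [hy, h, mul_zero])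
  refine isSquare_of_norm_sq_sub_lt (a := z) ?_
  rw [norm_mul, norm_two hp2, hz, one_mul, one_pow, ← mem_nonunits,
    ← IsLocalRing.mem_maximalIdeal, ← ker_toZMod, RingHom.mem_ker, map_sub, map_pow, hy, sq,
    sub_self]

end PadicInt

namespace Padic

variable {p : ℕ} [Fact p.Prime]

theorem isSquare_neg_one (hp : p % 4 = 1) : IsSquare (-1 : ℚ_[p]) := by
  have hp2 : p ≠ 2 := by omega
  have hp3 : p % 4 ≠ 3 := by omega
  obtain ⟨z, hz⟩ := PadicInt.isSquare_of_isSquare_toZMod (x := -1) hp2 (by simp)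
    (by simpa using ZMod.exists_sq_eq_neg_one_iff.mpr hp3)
  exact ⟨z, by exact_mod_cast congrArg ((↑) : ℤ_[p] → ℚ_[p]) hz⟩

theorem isSquare_of_norm_sub_sq_lt_one (hp2 : p ≠ 2) {x y : ℚ_[p]} (hy : ‖y‖ = 1)
    (h : ‖x - y ^ 2‖ < 1) : IsSquare x := by
  have hx : ‖x‖ ≤ 1 := by
    calc ‖x‖ = ‖(x - y ^ 2) + y ^ 2‖ := by rw [sub_add_cancel]
    _ ≤ max ‖x - y ^ 2‖ ‖y ^ 2‖ := IsUltrametricDist.norm_add_le_max _ _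
    _ ≤ 1 := max_le h.le (by rw [norm_pow, hy, one_pow])
  obtain ⟨x, rfl⟩ : ∃ x' : ℤ_[p], (x' : ℚ_[p]) = x := ⟨⟨x, hx⟩, rfl⟩
  obtain ⟨y, rfl⟩ : ∃ y' : ℤ_[p], (y' : ℚ_[p]) = y := ⟨⟨y, hy.le⟩, rfl⟩
  obtain ⟨z, rfl⟩ := PadicInt.isSquare_of_norm_sq_sub_lt (x := x) (a := y) (by
    rw [norm_mul, PadicInt.norm_two hp2, one_mul, PadicInt.norm_def (z := y), hy, one_pow,
      norm_sub_rev, PadicInt.norm_def]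
    exact_mod_cast h)
  exact ⟨z, by push_cast; ring⟩

theorem norm_sq_ne_norm_p_mul_sq (x : ℚ_[p]) {y : ℚ_[p]} (hy : y ≠ 0) :
    ‖x ^ 2‖ ≠ ‖(p : ℚ_[p]) * y ^ 2‖ := by
  have hp0 : (p : ℚ_[p]) ≠ 0 := Nat.cast_ne_zero.mpr (Fact.out : p.Prime).ne_zero
  rcases eq_or_ne x 0 with rfl | hx
  · simp [hy, (Fact.out : p.Prime).ne_zero]
  rw [norm_eq_zpow_neg_valuation (pow_ne_zero 2 hx),
    norm_eq_zpow_neg_valuation (mul_ne_zero hp0 (pow_ne_zero 2 hy)),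
    valuation_mul hp0 (pow_ne_zero 2 hy), valuation_p, valuation_pow, valuation_pow]
  intro h
  have hp : (p : ℝ) ≠ 1 := by exact_mod_cast (Fact.out : p.Prime).one_lt.ne'
  have := zpow_right_injective₀ (by exact_mod_cast (Fact.out : p.Prime).pos) hp h
  push_cast at this
  omega

variable {v : ℚ_[p]}

theorem norm_sq_sub_mul_sq (hp2 : p ≠ 2) (hv : ‖v‖ = 1) (hvsq : ¬ IsSquare v)
    (a b : ℚ_[p]) :
    ‖a ^ 2 - v * b ^ 2‖ = max ‖a‖ ‖b‖ ^ 2 := by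
  rcases ne_or_eq ‖a‖ ‖b‖ with hab | hab
  · have hne : ‖a ^ 2‖ ≠ ‖-(v * b ^ 2)‖ := by
      simpa [hv] using
        (pow_left_strictMonoOn₀ two_ne_zero).injOn.ne (norm_nonneg a) (norm_nonneg b) hab
    rw [sub_eq_add_neg, IsUltrametricDist.norm_add_eq_max_of_norm_ne_norm hne,
      (pow_left_strictMonoOn₀ two_ne_zero).monotoneOn.map_max (norm_nonneg a) (norm_nonneg b)]
    simp [hv]
  rcases eq_or_ne b 0 with rfl | hb
  · simp_all
  have hunit : ‖(a / b) ^ 2 - v‖ = 1 := by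
    refine le_antisymm ?_ (not_lt.mp fun h => hvsq (isSquare_of_norm_sub_sq_lt_one hp2
      (y := a / b) (by simp [hab, hb]) (by rwa [norm_sub_rev])))
    calc ‖(a / b) ^ 2 - v‖ = ‖(a / b) ^ 2 + -v‖ := by rw [sub_eq_add_neg]
    _ ≤ max ‖(a / b) ^ 2‖ ‖-v‖ := IsUltrametricDist.norm_add_le_max _ _
    _ = 1 := by simp [hab, hb, hv]
  calc ‖a ^ 2 - v * b ^ 2‖ = ‖b ^ 2 * ((a / b) ^ 2 - v)‖ := by field_simp
  _ = max ‖a‖ ‖b‖ ^ 2 := by rw [norm_mul, hunit, hab, max_self, norm_pow, mul_one]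

theorem max_norm_eq_one_of_sq_sub_mul_sq_add_p_mul_sq_eq (hp2 : p ≠ 2) (hv : ‖v‖ = 1)
    (hvsq : ¬ IsSquare v) {a b c r : ℚ_[p]} (h : a ^ 2 - v * b ^ 2 + p * c ^ 2 = r)
    (hr : ‖r‖ = 1) : max ‖a‖ ‖b‖ = 1 ∧ ‖(p : ℚ_[p]) * c ^ 2‖ < 1 := by
  obtain ⟨x, hx⟩ : ∃ x, ‖a ^ 2 - v * b ^ 2‖ = ‖x ^ 2‖ := by
    rcases max_choice ‖a‖ ‖b‖ with hm | hm
    exacts [⟨a, by rw [norm_sq_sub_mul_sq hp2 hv hvsq, hm, norm_pow]⟩,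
      ⟨b, by rw [norm_sq_sub_mul_sq hp2 hv hvsq, hm, norm_pow]⟩]
  -- `‖x ^ 2‖` and `‖p * c ^ 2‖` are an even and an odd power of `p`, so they cannot cancel.
  have key : ‖a ^ 2 - v * b ^ 2‖ = 1 ∧ ‖(p : ℚ_[p]) * c ^ 2‖ < 1 := by
    rcases eq_or_ne c 0 with rfl | hc
    · simp_all
    have hpc : ‖(p : ℚ_[p]) * c ^ 2‖ ≠ 1 := fun h1 =>
      norm_sq_ne_norm_p_mul_sq 1 hc (by rw [one_pow, norm_one, h1])
    have hmax : max ‖a ^ 2 - v * b ^ 2‖ ‖(p : ℚ_[p]) * c ^ 2‖ = 1 := by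
      rw [← IsUltrametricDist.norm_add_eq_max_of_norm_ne_norm
        (hx ▸ norm_sq_ne_norm_p_mul_sq x hc), h, hr]
    rcases max_cases ‖a ^ 2 - v * b ^ 2‖ ‖(p : ℚ_[p]) * c ^ 2‖ with
      ⟨hm, hle⟩ | ⟨hm, -⟩ <;> rw [hm] at hmax
    · exact ⟨hmax, lt_of_le_of_ne (hmax ▸ hle) hpc⟩
    · exact absurd hmax hpc
  rw [norm_sq_sub_mul_sq hp2 hv hvsq,
    pow_eq_one_iff_of_nonneg ((norm_nonneg a).trans (le_max_left _ _)) two_ne_zero] at key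
  exact key

theorem exists_sq_eq_of_sq_sub_mul_sq_add_p_mul_sq_eq_neg (hp2 : p ≠ 2) (hv : ‖v‖ = 1)
    (hvsq : ¬ IsSquare v) (hnegv : ¬ IsSquare (-v)) {a b c : ℚ_[p]}
    (h : a ^ 2 - v * b ^ 2 + p * c ^ 2 = -v) : ∃ α ≠ 0, -v * α ^ 2 = -v - a ^ 2 := by
  obtain ⟨hmax, hpc⟩ :=
    max_norm_eq_one_of_sq_sub_mul_sq_add_p_mul_sq_eq hp2 hv hvsq h (by rw [norm_neg, hv])
  have hb : ‖b‖ = 1 := by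
    by_contra hb
    have ha : ‖a‖ = 1 := by
      rcases max_choice ‖a‖ ‖b‖ with hm | hm <;> rw [hm] at hmax
      exacts [hmax, absurd hmax hb]
    refine hnegv (isSquare_of_norm_sub_sq_lt_one hp2 ha ?_)
    have hvb : ‖-(v * b ^ 2)‖ < 1 := by
      simpa [hv] using
        pow_lt_one₀ (norm_nonneg b) ((hmax ▸ le_max_right _ _).lt_of_ne hb) two_ne_zero
    calc ‖-v - a ^ 2‖ = ‖-(v * b ^ 2) + p * c ^ 2‖ := by congr 1; linear_combination -h
    _ ≤ max ‖-(v * b ^ 2)‖ ‖(p : ℚ_[p]) * c ^ 2‖ :=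
      IsUltrametricDist.norm_add_le_max _ _
    _ < 1 := max_lt hvb hpc
  have hv0 : v ≠ 0 := by rintro rfl; simp at hv
  obtain ⟨α, hα⟩ := isSquare_of_norm_sub_sq_lt_one hp2 hb (x := b ^ 2 - p * c ^ 2 / v)
    (by rwa [sub_sub_cancel_left, norm_neg, norm_div, hv, div_one])
  have hid : -v * α ^ 2 = -v - a ^ 2 := by
    rw [sq α, ← hα]
    field_simp
    linear_combination h
  refine ⟨α, fun hα0 => hnegv ⟨a, ?_⟩, hid⟩
  rw [hα0] at hid
  linear_combination -hid

theorem exists_sq_eq_of_sq_sub_mul_sq_add_p_mul_sq_eq_one (hp2 : p ≠ 2) (hv : ‖v‖ = 1)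
    (hvsq : ¬ IsSquare v) (hnegv : ¬ IsSquare (-v)) {a b c : ℚ_[p]}
    (h : a ^ 2 - v * b ^ 2 + p * c ^ 2 = 1) : ∃ α ≠ 0, α ^ 2 = 1 + v * b ^ 2 := by
  obtain ⟨hmax, hpc⟩ := max_norm_eq_one_of_sq_sub_mul_sq_add_p_mul_sq_eq hp2 hv hvsq h norm_one
  have ha : ‖a‖ = 1 := by
    by_contra ha
    have hb : ‖b‖ = 1 := by
      rcases max_choice ‖a‖ ‖b‖ with hm | hm <;> rw [hm] at hmax
      exacts [absurd hmax ha, hmax]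
    have hb0 : b ≠ 0 := by rintro rfl; simp at hb
    refine hnegv (isSquare_of_norm_sub_sq_lt_one hp2 (y := b⁻¹) (by simp [hb]) ?_)
    have ha2 : ‖a ^ 2‖ < 1 := by
      simpa using
        pow_lt_one₀ (norm_nonneg a) ((hmax ▸ le_max_left _ _).lt_of_ne ha) two_ne_zero
    calc ‖-v - b⁻¹ ^ 2‖ = ‖a ^ 2 + p * c ^ 2‖ := by
          rw [show -v - b⁻¹ ^ 2 = -(a ^ 2 + p * c ^ 2) * b⁻¹ ^ 2 by
            field_simp; linear_combination h,
            norm_mul, norm_neg, norm_pow, norm_inv, hb, inv_one, one_pow, mul_one]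
    _ ≤ max ‖a ^ 2‖ ‖(p : ℚ_[p]) * c ^ 2‖ := IsUltrametricDist.norm_add_le_max _ _
    _ < 1 := max_lt ha2 hpc
  obtain ⟨α, hα⟩ := isSquare_of_norm_sub_sq_lt_one hp2 ha (x := a ^ 2 + p * c ^ 2)
    (by rwa [add_sub_cancel_left])
  have hid : α ^ 2 = 1 + v * b ^ 2 := by
    rw [sq α, ← hα]
    linear_combination h
  refine ⟨α, fun hα0 => hnegv ⟨b⁻¹, ?_⟩, hid⟩
  have hb0 : b ≠ 0 := by rintro rfl; simp [hα0] at hid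
  rw [hα0] at hid
  field_simp
  linear_combination hid

end Padic

namespace Matrix

section SpecialOrthogonal

variable {n R : Type*} [Fintype n] [DecidableEq n] [CommRing R]

def specialOrthogonalGroupOf (A : Matrix n n R) : Submonoid (Matrix n n R) where
  carrier := {L | Lᵀ * A * L = A ∧ L.det = 1}
  mul_mem' {L₁ L₂} h₁ h₂ := by
    refine ⟨?_, by rw [det_mul, h₁.2, h₂.2, mul_one]⟩
    calc (L₁ * L₂)ᵀ * A * (L₁ * L₂) = L₂ᵀ * (L₁ᵀ * A * L₁) * L₂ := by
          simp only [transpose_mul, Matrix.mul_assoc]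
    _ = A := by rw [h₁.1, h₂.1]
  one_mem' := by simp

variable {A : Matrix n n R}

theorem inv_mem_specialOrthogonalGroupOf {L : Matrix n n R}
    (hL : L ∈ specialOrthogonalGroupOf A) : L⁻¹ ∈ specialOrthogonalGroupOf A := by
  have hdet : IsUnit L.det := by rw [hL.2]; exact isUnit_one
  refine ⟨?_, by rw [det_nonsing_inv, hL.2, Ring.inverse_one]⟩
  calc L⁻¹ᵀ * A * L⁻¹ = L⁻¹ᵀ * (Lᵀ * A * L) * L⁻¹ := by rw [hL.1]
  _ = (L * L⁻¹)ᵀ * A * (L * L⁻¹) := by simp only [transpose_mul, Matrix.mul_assoc]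
  _ = A := by rw [mul_nonsing_inv L hdet, transpose_one, Matrix.one_mul, Matrix.mul_one]

theorem exists_mem_mulVec_eq_and_eq_mul {M P : Matrix n n R} {u : n → R}
    (hM : M ∈ specialOrthogonalGroupOf A) (hP : P ∈ specialOrthogonalGroupOf A)
    (h : P *ᵥ u = M *ᵥ u) :
    ∃ Y ∈ specialOrthogonalGroupOf A, Y *ᵥ u = u ∧ M = P * Y := by
  have hdet : IsUnit P.det := by rw [hP.2]; exact isUnit_one
  refine ⟨P⁻¹ * M, mul_mem (inv_mem_specialOrthogonalGroupOf hP) hM, ?_, ?_⟩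
  · rw [← mulVec_mulVec, ← h, mulVec_mulVec, nonsing_inv_mul P hdet, one_mulVec]
  · rw [← Matrix.mul_assoc, mul_nonsing_inv P hdet, Matrix.one_mul]

end SpecialOrthogonal

section DiagonalForm

variable {R : Type*} [CommRing R] {d₀ d₁ d₂ : R}

theorem sum_mul_sq_eq_of_mem_specialOrthogonalGroupOf {M : Matrix (Fin 3) (Fin 3) R}
    (hM : M ∈ specialOrthogonalGroupOf (diagonal ![d₀, d₁, d₂])) (j : Fin 3) :
    d₀ * M 0 j ^ 2 + d₁ * M 1 j ^ 2 + d₂ * M 2 j ^ 2 = ![d₀, d₁, d₂] j := by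
  have := congrFun₂ hM.1 j j
  simp only [mul_apply, Fin.sum_univ_three, transpose_apply, diagonal_apply] at this
  fin_cases j <;> simp at this ⊢ <;> linear_combination this

def rotX (d₁ d₂ γ δ : R) : Matrix (Fin 3) (Fin 3) R :=
  !![1, 0, 0; 0, γ, -d₂ * δ; 0, d₁ * δ, γ]

def rotY (d₀ d₂ γ δ : R) : Matrix (Fin 3) (Fin 3) R :=
  !![γ, 0, -d₂ * δ; 0, 1, 0; d₀ * δ, 0, γ]

def rotZ (d₀ d₁ γ δ : R) : Matrix (Fin 3) (Fin 3) R :=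
  !![γ, -d₁ * δ, 0; d₀ * δ, γ, 0; 0, 0, 1]

variable {γ δ : R}

theorem rotX_mem (h : γ ^ 2 + d₁ * d₂ * δ ^ 2 = 1) :
    rotX d₁ d₂ γ δ ∈ specialOrthogonalGroupOf (diagonal ![d₀, d₁, d₂]) := by
  refine ⟨?_, by simp [rotX, det_fin_three]; linear_combination h⟩
  ext i j
  fin_cases i <;> fin_cases j <;> simp [rotX, mul_apply, Fin.sum_univ_three] <;>
    first | ring1 | linear_combination d₁ * h | linear_combination d₂ * h

theorem rotY_mem (h : γ ^ 2 + d₀ * d₂ * δ ^ 2 = 1) :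
    rotY d₀ d₂ γ δ ∈ specialOrthogonalGroupOf (diagonal ![d₀, d₁, d₂]) := by
  refine ⟨?_, by simp [rotY, det_fin_three]; linear_combination h⟩
  ext i j
  fin_cases i <;> fin_cases j <;> simp [rotY, mul_apply, Fin.sum_univ_three] <;>
    first | ring1 | linear_combination d₀ * h | linear_combination d₂ * h

theorem rotZ_mem (h : γ ^ 2 + d₀ * d₁ * δ ^ 2 = 1) :
    rotZ d₀ d₁ γ δ ∈ specialOrthogonalGroupOf (diagonal ![d₀, d₁, d₂]) := by
  refine ⟨?_, by simp [rotZ, det_fin_three]; linear_combination h⟩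
  ext i j
  fin_cases i <;> fin_cases j <;> simp [rotZ, mul_apply, Fin.sum_univ_three] <;>
    first | ring1 | linear_combination d₀ * h | linear_combination d₁ * h

theorem rotX_mulVec_single : rotX d₁ d₂ γ δ *ᵥ Pi.single 0 1 = Pi.single 0 1 := by
  ext i; fin_cases i <;> simp [rotX]

theorem rotY_mulVec_single : rotY d₀ d₂ γ δ *ᵥ Pi.single 1 1 = Pi.single 1 1 := by
  ext i; fin_cases i <;> simp [rotY]

theorem rotZ_mulVec_single : rotZ d₀ d₁ γ δ *ᵥ Pi.single 2 1 = Pi.single 2 1 := by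
  ext i; fin_cases i <;> simp [rotZ]

end DiagonalForm

section Factorization

variable {K : Type*} [Field K] {d₀ d₁ d₂ : K} {M : Matrix (Fin 3) (Fin 3) K}

theorem exists_rotX_rotZ_factorization (hd₁ : d₁ ≠ 0)
    (hM : M ∈ specialOrthogonalGroupOf (diagonal ![d₀, d₁, d₂])) {α : K} (hα0 : α ≠ 0)
    (hα : d₁ * α ^ 2 = d₁ - d₀ * M 0 1 ^ 2) :
    ∃ X Z Y, X ∈ specialOrthogonalGroupOf (diagonal ![d₀, d₁, d₂]) ∧
      Z ∈ specialOrthogonalGroupOf (diagonal ![d₀, d₁, d₂]) ∧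
      Y ∈ specialOrthogonalGroupOf (diagonal ![d₀, d₁, d₂]) ∧
      X *ᵥ Pi.single 0 1 = Pi.single 0 1 ∧ Z *ᵥ Pi.single 2 1 = Pi.single 2 1 ∧
      Y *ᵥ Pi.single 1 1 = Pi.single 1 1 ∧ M = X * Z * Y := by
  have hcol := sum_mul_sq_eq_of_mem_specialOrthogonalGroupOf hM 1
  simp only [cons_val_one, cons_val_zero] at hcol
  -- `Z` moves `e₂` to `(M 0 1, α, 0)` and `X` moves this to the column `M e₂`.
  set X := rotX d₁ d₂ (M 1 1 / α) (M 2 1 / (d₁ * α))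
  set Z := rotZ d₀ d₁ α (-M 0 1 / d₁)
  have hX : X ∈ specialOrthogonalGroupOf (diagonal ![d₀, d₁, d₂]) := rotX_mem (by
    field_simp
    linear_combination hcol - hα)
  have hZ : Z ∈ specialOrthogonalGroupOf (diagonal ![d₀, d₁, d₂]) := rotZ_mem (by
    field_simp
    linear_combination hα)
  obtain ⟨Y, hY, hYe, hMY⟩ := exists_mem_mulVec_eq_and_eq_mul hM (mul_mem hX hZ)
    (u := Pi.single 1 1) (by
      rw [← mulVec_mulVec]
      ext i
      fin_cases i <;> simp [X, Z, rotX, rotZ, mulVec, dotProduct, Fin.sum_univ_three] <;>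
        field_simp)
  exact ⟨X, Z, Y, hX, hZ, hY, rotX_mulVec_single, rotZ_mulVec_single, hYe, hMY⟩

theorem exists_rotY_rotZ_factorization (hd₀ : d₀ ≠ 0)
    (hM : M ∈ specialOrthogonalGroupOf (diagonal ![d₀, d₁, d₂])) {α : K} (hα0 : α ≠ 0)
    (hα : d₀ * α ^ 2 = d₀ - d₁ * M 1 0 ^ 2) :
    ∃ Y Z X, Y ∈ specialOrthogonalGroupOf (diagonal ![d₀, d₁, d₂]) ∧
      Z ∈ specialOrthogonalGroupOf (diagonal ![d₀, d₁, d₂]) ∧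
      X ∈ specialOrthogonalGroupOf (diagonal ![d₀, d₁, d₂]) ∧
      Y *ᵥ Pi.single 1 1 = Pi.single 1 1 ∧ Z *ᵥ Pi.single 2 1 = Pi.single 2 1 ∧
      X *ᵥ Pi.single 0 1 = Pi.single 0 1 ∧ M = Y * Z * X := by
  have hcol := sum_mul_sq_eq_of_mem_specialOrthogonalGroupOf hM 0
  simp only [cons_val_zero] at hcol
  -- `Z` moves `e₁` to `(α, M 1 0, 0)` and `Y` moves this to the column `M e₁`.
  set Y := rotY d₀ d₂ (M 0 0 / α) (M 2 0 / (d₀ * α))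
  set Z := rotZ d₀ d₁ α (M 1 0 / d₀)
  have hY : Y ∈ specialOrthogonalGroupOf (diagonal ![d₀, d₁, d₂]) := rotY_mem (by
    field_simp
    linear_combination hcol - hα)
  have hZ : Z ∈ specialOrthogonalGroupOf (diagonal ![d₀, d₁, d₂]) := rotZ_mem (by
    field_simp
    linear_combination hα)
  obtain ⟨X, hX, hXe, hMX⟩ := exists_mem_mulVec_eq_and_eq_mul hM (mul_mem hY hZ)
    (u := Pi.single 0 1) (by
      rw [← mulVec_mulVec]
      ext i
      fin_cases i <;> simp [Y, Z, rotY, rotZ, mulVec, dotProduct, Fin.sum_univ_three] <;>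
        field_simp)
  exact ⟨Y, Z, X, hY, hZ, hX, rotY_mulVec_single, rotZ_mulVec_single, hXe, hMX⟩

end Factorization

end Matrix

/-- For `p ≡ 1 (mod 4)`, every `M ∈ SO(3)_p` admits Cardano
decompositions `M = X·Z·Y` and `M = Y'·Z'·X'`, where factors labelled X, Y, Z
are elements of `SO(3)_p` fixing `e₁`, `e₂`, `e₃` respectively. -/
theorem cardano_decompositions_one_mod_four
    (p : ℕ) [Fact p.Prime] (hp : p % 4 = 1)
    (v : ℚ_[p]) (hv : ‖v‖ = 1) (hvsq : ¬ IsSquare v)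
    (A : Matrix (Fin 3) (Fin 3) ℚ_[p])
    (hA : A = Matrix.diagonal ![1, -v, (p : ℚ_[p])])
    (SO3 : Set (Matrix (Fin 3) (Fin 3) ℚ_[p]))
    (hSO3 : SO3 = {L | Lᵀ * A * L = A ∧ L.det = 1})
    (e : Fin 3 → (Fin 3 → ℚ_[p])) (he : ∀ i, e i = Pi.single i 1)
    (M : Matrix (Fin 3) (Fin 3) ℚ_[p]) (hM : M ∈ SO3) :
    (∃ X Z Y, X ∈ SO3 ∧ Z ∈ SO3 ∧ Y ∈ SO3 ∧
      X.mulVec (e 0) = e 0 ∧ Z.mulVec (e 2) = e 2 ∧ Y.mulVec (e 1) = e 1 ∧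
      M = X * Z * Y) ∧
    (∃ Y Z X, Y ∈ SO3 ∧ Z ∈ SO3 ∧ X ∈ SO3 ∧
      Y.mulVec (e 1) = e 1 ∧ Z.mulVec (e 2) = e 2 ∧ X.mulVec (e 0) = e 0 ∧
      M = Y * Z * X) := by
  have hp2 : p ≠ 2 := by omega
  have hv0 : v ≠ 0 := by rintro rfl; simp at hv
  have hnegv : ¬ IsSquare (-v) := fun h => hvsq (by simpa using (Padic.isSquare_neg_one hp).mul h)
  subst hA hSO3
  change M ∈ specialOrthogonalGroupOf _ at hM
  have hcol₀ := sum_mul_sq_eq_of_mem_specialOrthogonalGroupOf hM 0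
  have hcol₁ := sum_mul_sq_eq_of_mem_specialOrthogonalGroupOf hM 1
  simp only [cons_val_zero, cons_val_one] at hcol₀ hcol₁
  obtain ⟨α, hα0, hα⟩ :=
    Padic.exists_sq_eq_of_sq_sub_mul_sq_add_p_mul_sq_eq_neg hp2 hv hvsq hnegv
    (a := M 0 1) (b := M 1 1) (c := M 2 1) (by linear_combination hcol₁)
  obtain ⟨β, hβ0, hβ⟩ :=
    Padic.exists_sq_eq_of_sq_sub_mul_sq_add_p_mul_sq_eq_one hp2 hv hvsq hnegv
    (a := M 0 0) (b := M 1 0) (c := M 2 0) (by linear_combination hcol₀)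
  simp only [he]
  exact ⟨exists_rotX_rotZ_factorization (neg_ne_zero.mpr hv0) hM hα0 (by linear_combination hα),
    exists_rotY_rotZ_factorization one_ne_zero hM hβ0 (by linear_combination hβ)⟩
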